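/- Let X = (I,P) be a probabilistic coherence space and let x ∈ P. Define I_x = {a ∈ I | ∃ε>0, x + ε·e_a ∈ P} (where e_a is the indicator vector of a) and P_x = {u ∈ [0,∞)^{I_x} | x + u ∈ P}, where u is extended by 0 on I∖I_x. Then (I_x, P_x) is a probabilistic coherence space, called the local PCS of X at x. Moreover, every u ∈ [0,∞)^I with x + u ∈ P vanishes outside I_x. -/

import Mathlib

open scoped ENNReal NNReal

noncomputable section

/-- ⟨u,u'⟩ = Σ_i u_i u'_i in [0,∞]. -/
def dotE {I : Type*} (u v : I → ℝ≥0∞) : ℝ≥0∞ := ∑' i, u i * v i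

/-- The orthogonal P⊥ of a set P ⊆ [0,∞]^I. -/
def orthE {I : Type*} (P : Set (I → ℝ≥0∞)) : Set (I → ℝ≥0∞) :=
  {v | ∀ u ∈ P, dotE u v ≤ 1}

/-- (I,P) is a probabilistic coherence space. -/
structure IsPCS {I : Type*} (P : Set (I → ℝ≥0∞)) : Prop where
  biorth : orthE (orthE P) = P
  nonzero : ∀ a, ∃ x ∈ P, 0 < x a
  bounded : ∀ a, ∃ m : ℝ≥0, ∀ x ∈ P, x a ≤ (m : ℝ≥0∞)

/-- The web I_x = {a ∈ I | ∃ε>0, x + ε·e_a ∈ P} of the local PCS at x. -/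
def locWeb {I : Type*} [DecidableEq I] (P : Set (I → ℝ≥0∞)) (x : I → ℝ≥0∞) : Set I :=
  {a | ∃ ε : ℝ≥0, 0 < ε ∧ x + Pi.single a (ε : ℝ≥0∞) ∈ P}

/-- Extension by 0 of a family indexed by S ⊆ I to a family indexed by I. -/
def extendZero {I : Type*} (S : Set I) (u : ↥S → ℝ≥0∞) : I → ℝ≥0∞ :=
  Function.extend Subtype.val u 0

/-- P_x = {u ∈ [0,∞)^{I_x} | x + u ∈ P} (u extended by 0 outside I_x). -/
def locPcs {I : Type*} [DecidableEq I] (P : Set (I → ℝ≥0∞)) (x : I → ℝ≥0∞) :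
    Set (↥(locWeb P x) → ℝ≥0∞) :=
  {u | x + extendZero (locWeb P x) u ∈ P}

/-!
If `x + u ∈ P` and `u a ≠ 0`, then `x + ε • e_a ≤ x + u` for `ε = min 1 (u a) > 0`, so `a ∈ I_x`
because `P = P⊥⊥` is downward closed.
For the biorthogonality of `P_x`, take `v ∈ P⊥`: the restriction of `v` to `I_x` has pairing at
most `1 - ⟨x, v⟩` with every element of `P_x`, and such a bound passes to `P_x⊥⊥` because a
polar is stable under rescaling; hence `⟨x + w, v⟩ ≤ 1` for every `w ∈ P_x⊥⊥`, i.e. `x + w ∈ P`.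
-/

section Pairing

variable {I : Type*}

lemma dotE_comm (u v : I → ℝ≥0∞) : dotE u v = dotE v u :=
  tsum_congr fun _ => mul_comm _ _

lemma dotE_add_left (u u' v : I → ℝ≥0∞) : dotE (u + u') v = dotE u v + dotE u' v := by
  simp only [dotE, Pi.add_apply, add_mul, ENNReal.tsum_add]

lemma dotE_smul_right (u v : I → ℝ≥0∞) (c : ℝ≥0∞) : dotE u (c • v) = c * dotE u v := by
  simp only [dotE, Pi.smul_apply, smul_eq_mul, mul_left_comm _ c, ENNReal.tsum_mul_left]

lemma dotE_mono_right (u : I → ℝ≥0∞) {v v' : I → ℝ≥0∞} (h : v ≤ v') : dotE u v ≤ dotE u v' :=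
  ENNReal.tsum_le_tsum fun i => by gcongr; exact h i

lemma subset_orthE_orthE (P : Set (I → ℝ≥0∞)) : P ⊆ orthE (orthE P) :=
  fun u hu v hv => dotE_comm u v ▸ hv u hu

lemma mem_orthE_of_le {Q : Set (I → ℝ≥0∞)} {v v' : I → ℝ≥0∞} (h : v ≤ v')
    (hv' : v' ∈ orthE Q) : v ∈ orthE Q :=
  fun u hu => (dotE_mono_right u h).trans (hv' u hu)

lemma mem_of_le_of_orthE_orthE_eq {P : Set (I → ℝ≥0∞)} (hP : orthE (orthE P) = P)
    {u u' : I → ℝ≥0∞} (h : u ≤ u') (hu' : u' ∈ P) : u ∈ P :=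
  hP.subset (mem_orthE_of_le h (hP.symm.subset hu'))

/-- Apply `w ∈ Q⊥⊥` to `c'⁻¹ • v ∈ Q⊥` for every `c' > c`. -/
lemma dotE_le_of_mem_orthE_orthE {Q : Set (I → ℝ≥0∞)} {v w : I → ℝ≥0∞} {c : ℝ≥0∞}
    (hv : ∀ u ∈ Q, dotE u v ≤ c) (hw : w ∈ orthE (orthE Q)) : dotE w v ≤ c := by
  refine le_of_forall_gt_imp_ge_of_dense fun c' hc' => ?_
  rcases eq_or_ne c' ∞ with rfl | hc'top
  · exact le_top
  have hc'0 : c' ≠ 0 := ne_bot_of_gt hc'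
  have hscaled : c'⁻¹ • v ∈ orthE Q := fun u hu => by
    rw [dotE_smul_right, ENNReal.inv_mul_le_iff hc'0 hc'top, mul_one]
    exact (hv u hu).trans hc'.le
  have := hw _ hscaled
  rwa [dotE_comm, dotE_smul_right, ENNReal.inv_mul_le_iff hc'0 hc'top, mul_one] at this

end Pairing

section ExtendZero

variable {I : Type*} (S : Set I) (u : S → ℝ≥0∞)

@[simp]
lemma extendZero_apply_coe (a : S) : extendZero S u a = u a :=
  Subtype.val_injective.extend_apply u 0 a

lemma extendZero_apply_of_notMem {i : I} (h : i ∉ S) : extendZero S u i = 0 :=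
  Function.extend_apply' _ _ i <| by rintro ⟨a, rfl⟩; exact h a.2

lemma extendZero_single [DecidableEq I] (a : S) (c : ℝ≥0∞) :
    extendZero S (Pi.single a c) = Pi.single (a : I) c := by
  funext i
  by_cases hi : i ∈ S
  · rw [show i = ((⟨i, hi⟩ : S) : I) from rfl, extendZero_apply_coe]
    simp [Pi.single_apply, Subtype.ext_iff]
  · rw [extendZero_apply_of_notMem S _ hi, Pi.single_eq_of_ne (by rintro rfl; exact hi a.2)]

lemma dotE_extendZero_left (v : I → ℝ≥0∞) :
    dotE (extendZero S u) v = dotE u fun a : S => v a := by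
  unfold dotE
  rw [← tsum_subtype_eq_of_support_subset (s := S)]
  · simp only [extendZero_apply_coe]
  · intro i hi
    by_contra h
    exact hi (by simp only [extendZero_apply_of_notMem S u h, zero_mul])

end ExtendZero

section LocalPCS

variable {I : Type*} [DecidableEq I] {P : Set (I → ℝ≥0∞)} {x : I → ℝ≥0∞}

lemma mem_locWeb_of_add_mem (hP : orthE (orthE P) = P) {u : I → ℝ≥0∞} (hu : x + u ∈ P)
    {a : I} (ha : u a ≠ 0) : a ∈ locWeb P x := by
  have hmin : min 1 (u a) ≠ ∞ := (min_le_left 1 (u a)).trans_lt ENNReal.one_lt_top |>.ne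
  refine ⟨(min 1 (u a)).toNNReal, ?_, mem_of_le_of_orthE_orthE_eq hP (fun i => ?_) hu⟩
  · exact ENNReal.toNNReal_pos (lt_min one_pos (pos_iff_ne_zero.mpr ha)).ne' hmin
  · rw [ENNReal.coe_toNNReal hmin, Pi.add_apply, Pi.add_apply]
    gcongr
    rcases eq_or_ne i a with rfl | hia
    · simpa only [Pi.single_eq_same] using min_le_right _ _
    · simp only [Pi.single_eq_of_ne hia, zero_le]

lemma orthE_orthE_locPcs (hP : orthE (orthE P) = P) (hx : x ∈ P) :
    orthE (orthE (locPcs P x)) = locPcs P x := by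
  refine Set.Subset.antisymm (fun w hw => ?_) (subset_orthE_orthE _)
  suffices x + extendZero _ w ∈ orthE (orthE P) from hP.subset this
  intro v hv
  have hxv : dotE x v ≤ 1 := hv x hx
  have hxv_top : dotE x v ≠ ∞ := (hxv.trans_lt ENNReal.one_lt_top).ne
  have hrestrict : ∀ u ∈ locPcs P x, dotE u (fun a : locWeb P x => v a) ≤ 1 - dotE x v :=
    fun u hu => by
      rw [← dotE_extendZero_left]
      exact ENNReal.le_sub_of_add_le_left hxv_top (by simpa only [dotE_add_left] using hv _ hu)
  calc dotE v (x + extendZero _ w)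
      = dotE x v + dotE w (fun a : locWeb P x => v a) := by
        rw [dotE_comm, dotE_add_left, dotE_extendZero_left]
    _ ≤ dotE x v + (1 - dotE x v) := by gcongr; exact dotE_le_of_mem_orthE_orthE hrestrict hw
    _ = 1 := add_tsub_cancel_of_le hxv

lemma exists_mem_locPcs_pos (a : locWeb P x) : ∃ u ∈ locPcs P x, 0 < u a := by
  obtain ⟨ε, hε, hmem⟩ := a.2
  refine ⟨Pi.single a (ε : ℝ≥0∞), ?_, by simpa using hε⟩
  show x + extendZero _ _ ∈ P
  rwa [extendZero_single]

lemma exists_bound_locPcs (hP : ∀ a, ∃ m : ℝ≥0, ∀ y ∈ P, y a ≤ (m : ℝ≥0∞))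
    (a : locWeb P x) : ∃ m : ℝ≥0, ∀ u ∈ locPcs P x, u a ≤ (m : ℝ≥0∞) := by
  obtain ⟨m, hm⟩ := hP a
  refine ⟨m, fun u hu => ?_⟩
  calc u a = extendZero _ u a := (extendZero_apply_coe _ u a).symm
    _ ≤ x a + extendZero _ u a := le_add_self
    _ ≤ m := hm _ hu

end LocalPCS

theorem stmt7_general {I : Type*} [DecidableEq I]
    (P : Set (I → ℝ≥0∞)) (hP : IsPCS P) (x : I → ℝ≥0∞) (hx : x ∈ P) :
    IsPCS (locPcs P x) ∧
      ∀ u : I → ℝ≥0∞, x + u ∈ P → ∀ a : I, a ∉ locWeb P x → u a = 0 :=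
  ⟨⟨orthE_orthE_locPcs hP.biorth hx, exists_mem_locPcs_pos, exists_bound_locPcs hP.bounded⟩,
    fun _ hu _ ha => by_contra fun hua => ha (mem_locWeb_of_add_mem hP.biorth hu hua)⟩

/-- (I_x, P_x) is a probabilistic coherence space (the local PCS of X at x), and every
u with x + u ∈ P vanishes outside I_x. -/
theorem stmt7 {I : Type*} [Countable I] [DecidableEq I]
    (P : Set (I → ℝ≥0∞)) (hP : IsPCS P) (x : I → ℝ≥0∞) (hx : x ∈ P) :
    IsPCS (locPcs P x) ∧
      ∀ u : I → ℝ≥0∞, x + u ∈ P → ∀ a : I, a ∉ locWeb P x → u a = 0 :=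
  stmt7_general P hP x hx
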